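/- arXiv:1905.00851 — 2 statements merged into one kernel-verified Lean document; each statement's English description precedes it below -/
import Mathlib

section
/- For v ∈ Λ_2(ℝ^4) with v = a·e_1∧e_2 + b·e_3∧e_4 where a, b ≥ 0, the mass norm satisfies ‖v‖_mass = a + b, which strictly exceeds the Euclidean norm √(a²+b²) when both a, b > 0. -/
open scoped RealInnerProductSpace

/-- Concrete model of `Λ_k(ℝ^d)`: coordinates indexed by increasing multi-indices
(identified with `k`-element subsets of `{1,…,d}`), equipped with the Euclidean
norm making the standard wedge basis orthonormal. -/
abbrev Lam (d k : ℕ) : Type := EuclideanSpace ℝ {s : Finset (Fin d) // s.card = k}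

/-- The wedge product `v_1 ∧ ⋯ ∧ v_k` in coordinates: its coefficient on the
increasing multi-index `s` is the corresponding `k × k` minor. -/
noncomputable def wedge {d k : ℕ} (v : Fin k → EuclideanSpace ℝ (Fin d)) : Lam d k :=
  WithLp.toLp 2 (fun s : {s : Finset (Fin d) // s.card = k} =>
    Matrix.det (Matrix.of fun i j => v j ((s.1.orderIsoOfFin s.2 i : Fin d))))

/-- A `k`-vector is simple if it is a wedge product of `k` vectors. -/
def IsSimple {d k : ℕ} (x : Lam d k) : Prop := ∃ v, x = wedge v

/-- The mass norm `‖x‖_mass = inf { Σ_i |ξ_i| : each ξ_i simple, x = Σ_i ξ_i }`,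
where `|·|` is the Euclidean norm. -/
noncomputable def massNorm {d k : ℕ} (x : Lam d k) : ℝ :=
  sInf { r : ℝ | ∃ (m : ℕ) (ξ : Fin m → Lam d k),
    (∀ i, IsSimple (ξ i)) ∧ x = ∑ i, ξ i ∧ r = ∑ i, ‖ξ i‖ }


/-! The lower bound is a calibration argument. The covector `φ = e¹²* + e³⁴*` (the Kähler form of
`ℂ²`) satisfies `φ(ξ) ≤ |ξ|` on simple 2-vectors (Wirtinger's inequality): for simple `ξ` the
Plücker relation `ξ₁₂ξ₃₄ - ξ₁₃ξ₂₄ + ξ₁₄ξ₂₃ = 0` turns `|ξ|² - φ(ξ)²` into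
`(ξ₁₃ - ξ₂₄)² + (ξ₁₄ + ξ₂₃)²`. As `φ` is linear and `φ(v) = a + b`, every decomposition of `v` into
simple 2-vectors has total norm at least `a + b`, and `v = a e₁∧e₂ + b e₃∧e₄` attains it. -/

section Wedge

variable {d : ℕ}

theorem IsSimple.smul {k : ℕ} {x : Lam d (k + 1)} (hx : IsSimple x) (c : ℝ) :
    IsSimple (c • x) := by
  obtain ⟨v, rfl⟩ := hx
  refine ⟨Function.update v 0 (c • v 0), ?_⟩
  ext s
  simp only [wedge, PiLp.smul_apply, smul_eq_mul]
  set M := Matrix.of fun i j => v j (s.1.orderIsoOfFin s.2 i : Fin d)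
  have hM :
      (Matrix.of fun i j => Function.update v 0 (c • v 0) j (s.1.orderIsoOfFin s.2 i : Fin d)) =
        M.updateCol 0 (c • fun i => M i 0) := by
    ext i j
    by_cases hj : j = 0
    · subst hj; simp [M]
    · simp [M, hj]
  rw [hM, Matrix.det_updateCol_smul, Matrix.updateCol_eq_self]

/-- The index of `e_{i+1} ∧ e_{j+1}`: `Fin d` counts from `0`. -/
def pairIdx (i j : Fin d) (hij : i < j := by decide) : {s : Finset (Fin d) // s.card = 2} :=
  ⟨{i, j}, Finset.card_pair hij.ne⟩

theorem orderEmbOfFin_pairIdx {i j : Fin d} (hij : i < j) :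
    ⇑((pairIdx i j hij).1.orderEmbOfFin (pairIdx i j hij).2) = ![i, j] := by
  refine (Finset.orderEmbOfFin_unique _ (fun m => ?_) fun m n hmn => ?_).symm
  · fin_cases m <;> simp [pairIdx]
  · fin_cases m <;> fin_cases n <;> first | exact hij | exact absurd hmn (by decide)

theorem exists_eq_pairIdx (s : {s : Finset (Fin d) // s.card = 2}) :
    ∃ i j, ∃ hij : i < j, s = pairIdx i j hij := by
  let f := s.1.orderEmbOfFin s.2
  refine ⟨f 0, f 1, f.strictMono (by decide), Subtype.ext ?_⟩
  have hf (m : Fin 2) : f m ∈ s.1 := s.1.orderEmbOfFin_mem s.2 m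
  refine (Finset.eq_of_subset_of_card_le ?_ ?_).symm
  · exact Finset.insert_subset (hf 0) (Finset.singleton_subset_iff.2 (hf 1))
  · rw [s.2]; exact (Finset.card_pair (f.injective.ne (by decide))).ge

theorem pairIdx_inj {i j k l : Fin d} (hij : i < j) (hkl : k < l) :
    pairIdx i j hij = pairIdx k l hkl ↔ i = k ∧ j = l := by
  refine ⟨fun h => ?_, by rintro ⟨rfl, rfl⟩; rfl⟩
  have h' : ![i, j] = ![k, l] := by
    rw [← orderEmbOfFin_pairIdx hij, ← orderEmbOfFin_pairIdx hkl]
    congr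
  exact ⟨congrFun h' 0, congrFun h' 1⟩

theorem wedge_apply_pairIdx (v : Fin 2 → EuclideanSpace ℝ (Fin d)) {i j : Fin d} (hij : i < j) :
    wedge v (pairIdx i j hij) = v 0 i * v 1 j - v 1 i * v 0 j := by
  simp [wedge, Matrix.det_fin_two, orderEmbOfFin_pairIdx]

theorem wedge_single_single {i j : Fin d} (hij : i < j) :
    wedge ![EuclideanSpace.single i (1 : ℝ), EuclideanSpace.single j 1] =
      EuclideanSpace.single (pairIdx i j hij) 1 := by
  ext s
  obtain ⟨k, l, hkl, rfl⟩ := exists_eq_pairIdx s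
  rw [wedge_apply_pairIdx _ hkl]
  simp only [PiLp.single_apply, pairIdx_inj, Matrix.cons_val_zero, Matrix.cons_val_one]
  split_ifs <;> simp_all
  exact lt_asymm hij hkl

end Wedge

section MassNorm

variable {d k : ℕ}

theorem massNorm_le_sum {m : ℕ} {x : Lam d k} (ξ : Fin m → Lam d k)
    (hξ : ∀ i, IsSimple (ξ i)) (hx : x = ∑ i, ξ i) : massNorm x ≤ ∑ i, ‖ξ i‖ := by
  refine csInf_le ⟨0, ?_⟩ ⟨m, ξ, hξ, hx, rfl⟩
  rintro r ⟨m, ξ, -, -, rfl⟩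
  exact Finset.sum_nonneg fun i _ => norm_nonneg _

theorem le_massNorm_of_calibration (φ : Lam d k →ₗ[ℝ] ℝ)
    (hφ : ∀ ξ, IsSimple ξ → φ ξ ≤ ‖ξ‖) {x : Lam d k}
    (hx : ∃ (m : ℕ) (ξ : Fin m → Lam d k), (∀ i, IsSimple (ξ i)) ∧ x = ∑ i, ξ i) :
    φ x ≤ massNorm x := by
  obtain ⟨m, ξ, hξ, hxξ⟩ := hx
  refine le_csInf ⟨_, m, ξ, hξ, hxξ, rfl⟩ ?_
  rintro r ⟨m, ξ, hξ, rfl, rfl⟩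
  rw [map_sum]
  exact Finset.sum_le_sum fun i _ => hφ _ (hξ i)

end MassNorm

section Wirtinger

theorem univ_eq_pairIdx_fin4 : (Finset.univ : Finset {s : Finset (Fin 4) // s.card = 2}) =
    {pairIdx 0 1, pairIdx 0 2, pairIdx 0 3, pairIdx 1 2, pairIdx 1 3, pairIdx 2 3} := by
  decide

theorem norm_sq_lam42 (x : Lam 4 2) :
    ‖x‖ ^ 2 = x (pairIdx 0 1) ^ 2 + x (pairIdx 0 2) ^ 2 + x (pairIdx 0 3) ^ 2 +
      x (pairIdx 1 2) ^ 2 + x (pairIdx 1 3) ^ 2 + x (pairIdx 2 3) ^ 2 := by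
  rw [EuclideanSpace.norm_sq_eq, univ_eq_pairIdx_fin4]
  simp [Finset.sum_insert, pairIdx_inj, add_assoc]

theorem IsSimple.plucker {ξ : Lam 4 2} (hξ : IsSimple ξ) :
    ξ (pairIdx 0 1) * ξ (pairIdx 2 3) - ξ (pairIdx 0 2) * ξ (pairIdx 1 3) +
      ξ (pairIdx 0 3) * ξ (pairIdx 1 2) = 0 := by
  obtain ⟨v, rfl⟩ := hξ
  simp only [wedge_apply_pairIdx]
  ring

noncomputable def kahlerForm : Lam 4 2 →ₗ[ℝ] ℝ :=
  (EuclideanSpace.proj (pairIdx 0 1) + EuclideanSpace.proj (pairIdx 2 3) : Lam 4 2 →L[ℝ] ℝ)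

theorem kahlerForm_apply (x : Lam 4 2) : kahlerForm x = x (pairIdx 0 1) + x (pairIdx 2 3) := rfl

theorem kahlerForm_le_norm {ξ : Lam 4 2} (hξ : IsSimple ξ) : kahlerForm ξ ≤ ‖ξ‖ := by
  rw [kahlerForm_apply]
  refine le_of_sq_le_sq ?_ (norm_nonneg ξ)
  have hP := hξ.plucker
  rw [norm_sq_lam42]
  nlinarith [sq_nonneg (ξ (pairIdx 0 2) - ξ (pairIdx 1 3)),
    sq_nonneg (ξ (pairIdx 0 3) + ξ (pairIdx 1 2))]

end Wirtinger

/-- For `v = a·e₁∧e₂ + b·e₃∧e₄ ∈ Λ_2(ℝ^4)` with `a, b ≥ 0`, the mass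
norm satisfies `‖v‖_mass = a + b`, which strictly exceeds the Euclidean norm
`√(a² + b²)` when both `a, b > 0`. -/
theorem massNorm_e12_add_e34 (a b : ℝ) (ha : 0 ≤ a) (hb : 0 ≤ b) :
    massNorm (a • wedge ![EuclideanSpace.single 0 (1:ℝ), EuclideanSpace.single 1 (1:ℝ)]
        + b • wedge ![EuclideanSpace.single 2 (1:ℝ), EuclideanSpace.single 3 (1:ℝ)]
        : Lam 4 2) = a + b ∧
      (0 < a → 0 < b → Real.sqrt (a ^ 2 + b ^ 2) < a + b) := by
  rw [wedge_single_single (by decide : (0 : Fin 4) < 1),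
    wedge_single_single (by decide : (2 : Fin 4) < 3)]
  set e₁₂ := EuclideanSpace.single (pairIdx (0 : Fin 4) 1) (1 : ℝ)
  set e₃₄ := EuclideanSpace.single (pairIdx (2 : Fin 4) 3) (1 : ℝ)
  have hsimple : ∀ i, IsSimple (![a • e₁₂, b • e₃₄] i) := by
    intro i
    fin_cases i
    · exact IsSimple.smul ⟨_, (wedge_single_single _).symm⟩ a
    · exact IsSimple.smul ⟨_, (wedge_single_single _).symm⟩ b
  have hsum : a • e₁₂ + b • e₃₄ = ∑ i, ![a • e₁₂, b • e₃₄] i := by simp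
  refine ⟨le_antisymm ?_ ?_, fun ha₀ hb₀ => ?_⟩
  · calc massNorm (a • e₁₂ + b • e₃₄) ≤ ∑ i, ‖![a • e₁₂, b • e₃₄] i‖ :=
          massNorm_le_sum _ hsimple hsum
      _ = a + b := by simp [e₁₂, e₃₄, norm_smul, abs_of_nonneg ha, abs_of_nonneg hb]
  · calc a + b = kahlerForm (a • e₁₂ + b • e₃₄) := by
          simp [kahlerForm_apply, e₁₂, e₃₄, pairIdx_inj]
      _ ≤ massNorm (a • e₁₂ + b • e₃₄) :=
          le_massNorm_of_calibration _ (fun _ => kahlerForm_le_norm) ⟨2, _, hsimple, hsum⟩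
  · rw [Real.sqrt_lt' (by positivity)]
    nlinarith
end

section
/- A nonzero n-vector v ∈ Λ_n(ℝ^{n+N}) is simple with coefficient v^{\bar 0,0} = 1 on e_1∧⋯∧e_n if and only if v = M(ξ(v)), where ξ(v) ∈ ℝ^{N×n} is defined by [ξ(v)]_{j,i} = (−1)^{n−i} v^{\bar i, j}. -/
/-- Concrete model of the exterior algebra coordinates over `ℝ^d`: a family of
coefficients indexed by subsets of `{1,…,d}` (a `k`-vector is supported on the
`k`-element subsets, i.e. increasing multi-indices). -/
abbrev LamF (d : ℕ) : Type := Finset (Fin d) → ℝ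

/-- The wedge product `v_1 ∧ ⋯ ∧ v_k` in coordinates: its coefficient on an
increasing multi-index `s` with `k` elements is the corresponding `k × k` minor,
and it vanishes on all other multi-indices. -/
noncomputable def wedgeF {d k : ℕ} (v : Fin k → (Fin d → ℝ)) : LamF d :=
  fun s =>
    if h : s.card = k then
      Matrix.det (Matrix.of fun i j => v j ((s.orderIsoOfFin h i : Fin d)))
    else 0

/-- The vector `e_i + ξ e_i ∈ ℝ^{n+N} = ℝ^n × ℝ^N`: first component the `i`-th
standard basis vector of `ℝ^n`, second component the `i`-th column of `ξ`. -/
noncomputable def graphVec {n N : ℕ} (ξ : Matrix (Fin N) (Fin n) ℝ) (i : Fin n) :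
    Fin (n + N) → ℝ :=
  Fin.append (Pi.single i (1 : ℝ)) (fun j => ξ j i)

/-- The map `M(ξ) = (e_1 + ξe_1) ∧ ⋯ ∧ (e_n + ξe_n) ∈ Λ_n(ℝ^{n+N})`. -/
noncomputable def M {n N : ℕ} (ξ : Matrix (Fin N) (Fin n) ℝ) : LamF (n + N) :=
  wedgeF (graphVec ξ)

/-- An `n`-vector (in coordinates) is *simple* if it is a wedge product of `n`
vectors of `ℝ^{n+N}`. -/
def IsSimpleF {d : ℕ} (k : ℕ) (v : LamF d) : Prop :=
  ∃ u : Fin k → (Fin d → ℝ), v = wedgeF u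

/-- The increasing multi-index of `e_1 ∧ ⋯ ∧ e_n`. -/
def idx0 (n N : ℕ) : Finset (Fin (n + N)) :=
  Finset.univ.image (Fin.castAdd N)

/-- The increasing multi-index of `e_{\bar i} ∧ ε_j`. -/
def idxBar (n N : ℕ) (i : Fin n) (j : Fin N) : Finset (Fin (n + N)) :=
  insert (Fin.natAdd n j) ((Finset.univ.erase i).image (Fin.castAdd N))

/-- The matrix `ξ(v) ∈ ℝ^{N×n}` extracted from the coefficients of an `n`-vector
`v` by `[ξ(v)]_{j,i} = (−1)^{n−i} v^{\bar i, j}` (with `i` zero-based). -/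
noncomputable def xiOf (n N : ℕ) (v : LamF (n + N)) : Matrix (Fin N) (Fin n) ℝ :=
  fun j i => (-1 : ℝ) ^ (n - 1 - (i : ℕ)) * v (idxBar n N i j)

/-!
If `v = u_1 ∧ ⋯ ∧ u_n` has coefficient `1` on `e_1 ∧ ⋯ ∧ e_n`, the top `n × n` block `A` of
the `u_i` has determinant `1`. Replacing `u` by `A⁻¹ u` does not change the wedge and turns the
top block into the identity, so `v = M(ξ)` for some `ξ`. Conversely, `M(ξ)` has coefficient `1`
on `e_1 ∧ ⋯ ∧ e_n`, and expanding its minor on `e_{\bar i} ∧ ε_j` along the `ε_j` row gives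
`(-1)^{n-1+i} ξ_{j,i}`, so `ξ(M(ξ)) = ξ`.
-/

open Finset Matrix

lemma Matrix.det_eq_neg_one_pow_mul_of_rows_eq_single {R : Type*} [CommRing R] {m : ℕ}
    (B : Matrix (Fin (m + 1)) (Fin (m + 1)) R) (i : Fin (m + 1))
    (hB : ∀ r, B r.castSucc = Pi.single (i.succAbove r) 1) :
    B.det = (-1) ^ (m + (i : ℕ)) * B (Fin.last m) i := by
  rw [det_succ_row B (Fin.last m), Finset.sum_eq_single i, Fin.val_last]
  · have hminor : B.submatrix (Fin.last m).succAbove i.succAbove = 1 := by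
      ext r c
      simp only [submatrix_apply, Fin.succAbove_last, hB, Pi.single_apply, Fin.succAbove_right_inj,
        one_apply, eq_comm]
    rw [hminor, det_one, mul_one]
  · intro c _ hci
    obtain ⟨r, hr⟩ := Fin.exists_succAbove_eq hci
    refine mul_eq_zero_of_right _ (det_eq_zero_of_row_eq_zero r fun c' => ?_)
    rw [submatrix_apply, Fin.succAbove_last, hB, hr, Pi.single_eq_of_ne (Fin.succAbove_ne c c')]
  · simp

lemma wedgeF_eq_det_of_strictMono {d k : ℕ} (u : Fin k → Fin d → ℝ) {s : Finset (Fin d)}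
    (hs : s.card = k) {f : Fin k → Fin d} (hf : StrictMono f) (hfs : ∀ r, f r ∈ s) :
    wedgeF u s = (Matrix.of fun r c => u c (f r)).det := by
  rw [wedgeF, dif_pos hs, orderEmbOfFin_unique hs hfs hf]
  rfl

lemma wedgeF_mul {d k : ℕ} (A : Matrix (Fin k) (Fin k) ℝ) (u : Fin k → Fin d → ℝ) :
    wedgeF (fun i x => ∑ l, A i l * u l x) = A.det • wedgeF u := by
  funext s
  simp only [wedgeF, Pi.smul_apply, smul_eq_mul]
  split
  · rw [mul_comm, ← det_transpose A, ← det_mul]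
    congr 1
    ext r c
    simp only [of_apply, mul_apply, transpose_apply, mul_comm]
  · rw [mul_zero]

lemma card_idx0 (n N : ℕ) : (idx0 n N).card = n := by
  rw [idx0, card_image_of_injective _ (Fin.castAdd_injective _ _), card_univ, Fintype.card_fin]

lemma wedgeF_idx0 {n N : ℕ} (u : Fin n → Fin (n + N) → ℝ) :
    wedgeF u (idx0 n N) = (Matrix.of fun i c => u i (Fin.castAdd N c)).det := by
  rw [wedgeF_eq_det_of_strictMono u (card_idx0 n N) (Fin.strictMono_castAdd N)
    (fun r => mem_image_of_mem _ (mem_univ r)), ← det_transpose]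
  rfl

lemma M_idx0 {n N : ℕ} (ξ : Matrix (Fin N) (Fin n) ℝ) : M ξ (idx0 n N) = 1 := by
  have htop : (Matrix.of fun i c => graphVec ξ i (Fin.castAdd N c)) = 1 := by
    ext i c
    simp only [of_apply, graphVec, Fin.append_left, one_apply, Pi.single_apply, eq_comm]
  rw [M, wedgeF_idx0, htop, det_one]

lemma eq_graphVec_of_castAdd_eq_one {n N : ℕ} (u : Fin n → Fin (n + N) → ℝ)
    (htop : ∀ i c, u i (Fin.castAdd N c) = (1 : Matrix (Fin n) (Fin n) ℝ) i c) :
    u = graphVec (fun j i => u i (Fin.natAdd n j)) := by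
  funext i x
  refine Fin.addCases (fun c => ?_) (fun j => ?_) x
  · simp only [graphVec, Fin.append_left, htop, one_apply, Pi.single_apply, eq_comm]
  · simp only [graphVec, Fin.append_right]

lemma exists_wedgeF_eq_M {n N : ℕ} (u : Fin n → Fin (n + N) → ℝ)
    (h1 : wedgeF u (idx0 n N) = 1) :
    ∃ ξ : Matrix (Fin N) (Fin n) ℝ, wedgeF u = M ξ := by
  set A : Matrix (Fin n) (Fin n) ℝ := Matrix.of fun i c => u i (Fin.castAdd N c)
  have hA : A.det = 1 := by rw [← h1, wedgeF_idx0]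
  have hunit : IsUnit A.det := hA ▸ isUnit_one
  set u' : Fin n → Fin (n + N) → ℝ := fun i x => ∑ l, A⁻¹ i l * u l x
  have hwedge : wedgeF u' = wedgeF u := by
    rw [wedgeF_mul, det_nonsing_inv, hA, Ring.inverse_one, one_smul]
  have htop : ∀ i c, u' i (Fin.castAdd N c) = (1 : Matrix (Fin n) (Fin n) ℝ) i c := by
    intro i c
    rw [← nonsing_inv_mul A hunit, mul_apply]
    rfl
  exact ⟨_, hwedge ▸ congrArg wedgeF (eq_graphVec_of_castAdd_eq_one u' htop)⟩

section idxBar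

variable {m N : ℕ}

def idxBarEnum (i : Fin (m + 1)) (j : Fin N) : Fin (m + 1) → Fin (m + 1 + N) :=
  Fin.snoc (fun r => Fin.castAdd N (i.succAbove r)) (Fin.natAdd (m + 1) j)

lemma natAdd_notMem_image_castAdd (j : Fin N) (t : Finset (Fin (m + 1))) :
    Fin.natAdd (m + 1) j ∉ t.image (Fin.castAdd N) := by
  simp only [mem_image, not_exists, not_and]
  intro x _ hx
  have := congrArg Fin.val hx
  simp only [Fin.val_castAdd, Fin.val_natAdd] at this
  omega

lemma card_idxBar (i : Fin (m + 1)) (j : Fin N) : (idxBar (m + 1) N i j).card = m + 1 := by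
  rw [idxBar, card_insert_of_notMem (natAdd_notMem_image_castAdd j _),
    card_image_of_injective _ (Fin.castAdd_injective _ _), card_erase_of_mem (mem_univ i),
    card_univ, Fintype.card_fin, Nat.add_sub_cancel]

lemma idxBarEnum_mem (i : Fin (m + 1)) (j : Fin N) (r : Fin (m + 1)) :
    idxBarEnum i j r ∈ idxBar (m + 1) N i j := by
  induction r using Fin.lastCases with
  | last => rw [idxBarEnum, Fin.snoc_last]; exact mem_insert_self _ _
  | cast r =>
    rw [idxBarEnum, Fin.snoc_castSucc]
    exact mem_insert_of_mem <| mem_image_of_mem _ <|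
      mem_erase.mpr ⟨Fin.succAbove_ne i r, mem_univ _⟩

lemma idxBarEnum_strictMono (i : Fin (m + 1)) (j : Fin N) : StrictMono (idxBarEnum i j) := by
  intro a b hab
  obtain ⟨a, rfl⟩ :=
    Fin.exists_castSucc_eq.mpr (Fin.lt_last_iff_ne_last.mp (hab.trans_le b.le_last))
  induction b using Fin.lastCases with
  | last =>
    rw [idxBarEnum, Fin.snoc_castSucc, Fin.snoc_last, Fin.lt_def, Fin.val_castAdd, Fin.val_natAdd]
    omega
  | cast b =>
    rw [idxBarEnum, Fin.snoc_castSucc, Fin.snoc_castSucc]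
    exact Fin.strictMono_castAdd N <|
      Fin.strictMono_succAbove i <| Fin.castSucc_lt_castSucc_iff.mp hab

lemma M_idxBar (ξ : Matrix (Fin N) (Fin (m + 1)) ℝ) (i : Fin (m + 1)) (j : Fin N) :
    M ξ (idxBar (m + 1) N i j) = (-1) ^ (m + (i : ℕ)) * ξ j i := by
  rw [M, wedgeF_eq_det_of_strictMono _ (card_idxBar i j) (idxBarEnum_strictMono i j)
    (idxBarEnum_mem i j), det_eq_neg_one_pow_mul_of_rows_eq_single _ i]
  · simp only [of_apply, idxBarEnum, Fin.snoc_last, graphVec, Fin.append_right]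
  · intro r
    funext c
    simp only [of_apply, idxBarEnum, Fin.snoc_castSucc, graphVec, Fin.append_left, Pi.single_apply,
      eq_comm]

end idxBar

lemma xiOf_M {n N : ℕ} (ξ : Matrix (Fin N) (Fin n) ℝ) : xiOf n N (M ξ) = ξ := by
  funext j i
  cases n with
  | zero => exact i.elim0
  | succ m =>
    rw [xiOf, M_idxBar, ← mul_assoc, ← pow_add,
      show m + 1 - 1 - (i : ℕ) + (m + i) = 2 * m by omega, pow_mul, neg_one_sq, one_pow, one_mul]

theorem simple_coeff_one_iff_eq_M_xiOf_general (n N : ℕ) (v : LamF (n + N)) :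
    (IsSimpleF n v ∧ v (idx0 n N) = 1) ↔ v = M (xiOf n N v) := by
  constructor
  · rintro ⟨⟨u, rfl⟩, h1⟩
    obtain ⟨ξ, hξ⟩ := exists_wedgeF_eq_M u h1
    rw [hξ, xiOf_M]
  · intro h
    exact ⟨⟨graphVec (xiOf n N v), h⟩, h ▸ M_idx0 _⟩

/-- A nonzero `n`-vector `v ∈ Λ_n(ℝ^{n+N})` is simple with
coefficient `v^{\bar 0,0} = 1` on `e_1 ∧ ⋯ ∧ e_n` if and only if `v = M(ξ(v))`. -/
theorem simple_coeff_one_iff_eq_M_xiOf (n N : ℕ) (v : LamF (n + N))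
    (hsupp : ∀ s : Finset (Fin (n + N)), s.card ≠ n → v s = 0)
    (hne : v ≠ 0) :
    (IsSimpleF n v ∧ v (idx0 n N) = 1) ↔ v = M (xiOf n N v) :=
  simple_coeff_one_iff_eq_M_xiOf_general n N v
end
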